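/- Let G be a graph containing no induced C_k* for any k ≥ 4 and no induced k-wheel for any k ≥ 4, such that for every chordless cycle C of G and vertex v off C, the neighbors of v on C induce a chordless path. Fix a chordless cycle C = v_1...v_n v_1 and define O_i, A_i, B_i as in the paper. Then for every o ∈ O_i, the neighborhood of o in G equals {v_i} together with the neighbors of o inside A_i ∪ O_i ∪ B_i. -/

import Mathlib

open SimpleGraph

/-- The circle (of circumference 1), as the additive circle `ℝ / ℤ`. -/
abbrev Circ : Type := AddCircle (1 : ℝ)

/-- The closed arc of the circle obtained by projecting the real interval `[p.1, p.2]`. -/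
def arcIcc (p : ℝ × ℝ) : Set Circ := (fun x : ℝ => (x : Circ)) '' Set.Icc p.1 p.2

/-- `M` is a circular-arc model of the graph `G`: each vertex gets a (nonempty, closed) arc,
and two distinct vertices are adjacent iff their arcs intersect. -/
def IsCAModel {V : Type*} (G : SimpleGraph V) (M : V → ℝ × ℝ) : Prop :=
  (∀ v, (M v).1 ≤ (M v).2) ∧
  ∀ u v : V, u ≠ v → (G.Adj u v ↔ (arcIcc (M u) ∩ arcIcc (M v)).Nonempty)

/-- A circular-arc graph: the intersection graph of a finite set of arcs on a circle. -/
def IsCircularArcGraph {V : Type*} [Finite V] (G : SimpleGraph V) : Prop :=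
  ∃ M : V → ℝ × ℝ, IsCAModel G M

/-- A normal Helly circular-arc graph: the intersection graph of a finite set of arcs
on a circle, no three of which together cover the circle. -/
def IsNHCAGraph {V : Type*} [Finite V] (G : SimpleGraph V) : Prop :=
  ∃ M : V → ℝ × ℝ, IsCAModel G M ∧
    ∀ u v w : V, u ≠ v → u ≠ w → v ≠ w →
      arcIcc (M u) ∪ arcIcc (M v) ∪ arcIcc (M w) ≠ Set.univ

/-- `M` is an interval model of `G`: closed real intervals, adjacency iff intersection. -/
def IsIntervalModel {V : Type*} (G : SimpleGraph V) (M : V → ℝ × ℝ) : Prop :=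
  (∀ v, (M v).1 ≤ (M v).2) ∧
  ∀ u v : V, u ≠ v →
    (G.Adj u v ↔ (Set.Icc (M u).1 (M u).2 ∩ Set.Icc (M v).1 (M v).2).Nonempty)

/-- An interval graph: the intersection graph of a finite set of intervals on a line. -/
def IsIntervalGraph {V : Type*} [Finite V] (G : SimpleGraph V) : Prop :=
  ∃ M : V → ℝ × ℝ, IsIntervalModel G M

/-- The chordless path `P_m` on `m` vertices. -/
def pathG (m : ℕ) : SimpleGraph (Fin m) :=
  SimpleGraph.fromRel (fun i j => i.val + 1 = j.val)

/-- The chordless cycle `C_n` on `n` vertices (intended for `n ≥ 3`). -/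
def cycG (n : ℕ) : SimpleGraph (Fin n) :=
  SimpleGraph.fromRel (fun i j => (i.val + 1) % n = j.val)

/-- `G` contains an induced copy of `H`. -/
def HasInduced {W V : Type*} (H : SimpleGraph W) (G : SimpleGraph V) : Prop :=
  Nonempty (H ↪g G)

/-- Add one isolated vertex to a graph. -/
def addIsolated {V : Type*} (G : SimpleGraph V) : SimpleGraph (Option V) :=
  SimpleGraph.fromRel (fun u v => ∃ a b, u = some a ∧ v = some b ∧ G.Adj a b)

/-- Add one universal vertex to a graph. -/
def addUniversal {V : Type*} (G : SimpleGraph V) : SimpleGraph (Option V) :=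
  SimpleGraph.fromRel (fun u v => (∃ a b, u = some a ∧ v = some b ∧ G.Adj a b) ∨ u = none)

/-- `C_k^*`: the chordless cycle `C_k` plus an isolated vertex. -/
def cycStar (k : ℕ) : SimpleGraph (Option (Fin k)) := addIsolated (cycG k)

/-- The `k`-wheel: the chordless cycle `C_k` plus a universal vertex. -/
def wheelG (k : ℕ) : SimpleGraph (Option (Fin k)) := addUniversal (cycG k)

/-- The bipartite claw: `K_{1,3}` with every edge subdivided once. -/
def bipartiteClaw : SimpleGraph (Fin 7) :=
  SimpleGraph.fromEdgeSet {s(0,1), s(0,2), s(0,3), s(1,4), s(2,5), s(3,6)}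

/-- The umbrella: a path `0-1-2-3-4`, a hub `5` adjacent to all path vertices,
and a vertex `6` adjacent only to the middle vertex `2` of the path. -/
def umbrella : SimpleGraph (Fin 7) :=
  SimpleGraph.fromEdgeSet
    {s(0,1), s(1,2), s(2,3), s(3,4), s(5,0), s(5,1), s(5,2), s(5,3), s(5,4), s(6,2)}

/-- The net (= 2-net): a triangle with one pendant vertex at each corner. -/
def netG : SimpleGraph (Fin 6) :=
  SimpleGraph.fromEdgeSet {s(0,1), s(1,2), s(2,0), s(3,0), s(4,1), s(5,2)}

/-- The tent (= 3-tent = 3-sun). -/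
def tentG : SimpleGraph (Fin 6) :=
  SimpleGraph.fromEdgeSet
    {s(0,1), s(1,2), s(2,0), s(3,0), s(3,1), s(4,1), s(4,2), s(5,2), s(5,0)}

/-- The `k`-net (for `k ≥ 2`), with `k + 4` vertices: a chordless path
`p_0, …, p_k` (indices `0, …, k`), a vertex `q = k+1` adjacent to `p_0, …, p_{k-1}`,
a pendant `r = k+2` on `q`, and a pendant `t = k+3` on `p_0`. -/
def kNet (k : ℕ) : SimpleGraph (Fin (k + 4)) :=
  SimpleGraph.fromRel (fun a b =>
    (a.val + 1 = b.val ∧ b.val ≤ k) ∨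
    (a.val = k + 1 ∧ b.val + 1 ≤ k) ∨
    (a.val = k + 1 ∧ b.val = k + 2) ∨
    (a.val = 0 ∧ b.val = k + 3))

/-- The `k`-tent (for `k ≥ 3`), with `k + 3` vertices: a chordless path
`p_0, …, p_{k-3}` (indices `0, …, k-3`), a vertex `a = k-2` adjacent to `p_0`,
a vertex `q = k-1` adjacent to `a` and to `p_0, …, p_{k-4}`, a pendant `r = k` on `q`,
a vertex `z = k+1` adjacent to `a` and `q`, and a hub `h = k+2` adjacent to every
vertex except `z`.  For `k = 3` this is the `3`-sun. -/
def kTent (k : ℕ) : SimpleGraph (Fin (k + 3)) :=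
  SimpleGraph.fromRel (fun x y =>
    (x.val + 1 = y.val ∧ y.val + 3 ≤ k) ∨
    (x.val + 2 = k ∧ y.val = 0) ∨
    (x.val + 2 = k ∧ y.val + 1 = k) ∨
    (x.val + 1 = k ∧ y.val + 4 ≤ k) ∨
    (x.val = k + 1 ∧ (y.val + 2 = k ∨ y.val + 1 = k)) ∨
    (x.val + 1 = k ∧ y.val = k) ∨
    (x.val = k + 2 ∧ y.val ≤ k))

/-- The Trotter–Moore graph `G_1` (as described in the source): vertices `x=0, y=1, z=2,
w₁=3, w₂=4` with edges `xy`, `yz`, and `w₁, w₂` each adjacent to `x`, `y`, `z`. -/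
def G1 : SimpleGraph (Fin 5) :=
  SimpleGraph.fromEdgeSet
    {s(0,1), s(1,2), s(3,0), s(3,1), s(3,2), s(4,0), s(4,1), s(4,2)}

/-- The Trotter–Moore graph `G_2`: a four-cycle `0-1-2-3`, a vertex `4` adjacent to `0`,
a vertex `5` adjacent to `2`, and the edge `4-5`. -/
def G2 : SimpleGraph (Fin 6) :=
  SimpleGraph.fromEdgeSet {s(0,1), s(1,2), s(2,3), s(3,0), s(4,0), s(5,2), s(4,5)}

/-- The Trotter–Moore graph `G_3`: a five-cycle `0-1-2-3-4` plus a vertex `5`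
adjacent to `0`, `2` and `3`. -/
def G3 : SimpleGraph (Fin 6) :=
  SimpleGraph.fromEdgeSet {s(0,1), s(1,2), s(2,3), s(3,4), s(4,0), s(5,0), s(5,2), s(5,3)}

/-- The Trotter–Moore graph `G_4`: a five-cycle `0-1-2-3-4`, a vertex `5` adjacent to `0`,
a vertex `6` adjacent to `2`, and the edge `5-6`. -/
def G4 : SimpleGraph (Fin 7) :=
  SimpleGraph.fromEdgeSet
    {s(0,1), s(1,2), s(2,3), s(3,4), s(4,0), s(5,0), s(6,2), s(5,6)}

/-- The domino: two four-cycles sharing an edge (`C_6` plus one long chord). -/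
def dominoG : SimpleGraph (Fin 6) :=
  SimpleGraph.fromEdgeSet {s(0,1), s(1,2), s(2,3), s(3,4), s(4,5), s(5,0), s(0,3)}

/-- The complement of the chordless six-cycle. -/
def C6bar : SimpleGraph (Fin 6) := (cycG 6)ᶜ

/-- Gimbel's graph `F_1`: a chordless path `0-1-2-3-4` together with a vertex `5`
whose only neighbor is the middle vertex `2` of the path. -/
def F1 : SimpleGraph (Fin 6) :=
  SimpleGraph.fromEdgeSet {s(0,1), s(1,2), s(2,3), s(3,4), s(5,2)}

/-- The set `A_i` with respect to a chordless cycle `c : Fin n → V`: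
vertices off the cycle adjacent to `v_{i-1}` and `v_i` having a neighbor `w`
adjacent to `v_i` but not to `v_{i-1}`. -/
def Aset {V : Type*} {n : ℕ} [NeZero n] (G : SimpleGraph V) (c : Fin n → V) (i : Fin n) : Set V :=
  {v | v ∉ Set.range c ∧ G.Adj v (c (i - 1)) ∧ G.Adj v (c i) ∧
    ∃ w, G.Adj v w ∧ G.Adj w (c i) ∧ ¬ G.Adj w (c (i - 1))}

/-- The set `B_i`: vertices off the cycle adjacent to `v_i` and `v_{i+1}` having a
neighbor `w` adjacent to `v_i` but not to `v_{i+1}`. -/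
def Bset {V : Type*} {n : ℕ} [NeZero n] (G : SimpleGraph V) (c : Fin n → V) (i : Fin n) : Set V :=
  {v | v ∉ Set.range c ∧ G.Adj v (c i) ∧ G.Adj v (c (i + 1)) ∧
    ∃ w, G.Adj v w ∧ G.Adj w (c i) ∧ ¬ G.Adj w (c (i + 1))}

/-- The set `O_i`: vertices off the cycle whose unique neighbor on the cycle is `v_i`. -/
def Oset {V : Type*} {n : ℕ} (G : SimpleGraph V) (c : Fin n → V) (i : Fin n) : Set V :=
  {v | v ∉ Set.range c ∧ ∀ j, G.Adj v (c j) ↔ j = i}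

/-- The set `T_i`: vertices off the cycle whose neighbors on the cycle are exactly
`v_i` and `v_{i+1}`, and which belong to neither `B_i` nor `A_{i+1}`. -/
def Tset {V : Type*} {n : ℕ} [NeZero n] (G : SimpleGraph V) (c : Fin n → V) (i : Fin n) : Set V :=
  {v | v ∉ Set.range c ∧ (∀ j, G.Adj v (c j) ↔ (j = i ∨ j = i + 1)) ∧
    v ∉ Bset G c i ∪ Aset G c (i + 1)}


/-!
A neighbour `x` of `o ∈ O_i` off the cycle shares a cycle vertex with `o`, which can only be
`v_i`. If `x` saw a second cycle vertex, its neighbours on the cycle would form a chordless path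
through `v_i` with at least two vertices, so `v_i` would have a path neighbour `v_{i-1}` or
`v_{i+1}` seen by `x`; with `w := o` this puts `x` in `A_i` or `B_i`. Otherwise `x ∈ O_i`.
-/

lemma Fin.add_one_ne_self {n : ℕ} [NeZero n] (hn : 2 ≤ n) (i : Fin n) : i + 1 ≠ i := by
  simp only [ne_eq, Fin.ext_iff, Fin.val_add, Fin.val_one']
  rcases Nat.lt_or_ge (i.val + 1) n with h | h
  · rw [Nat.mod_eq_of_lt (by omega : 1 < n), Nat.mod_eq_of_lt h]; omega
  · rw [Nat.mod_eq_of_lt (by omega : 1 < n), (by omega : i.val + 1 = n), Nat.mod_self]; omega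

lemma Fin.sub_one_ne_self {n : ℕ} [NeZero n] (hn : 2 ≤ n) (i : Fin n) : i - 1 ≠ i := by
  intro h
  exact Fin.add_one_ne_self hn (i - 1) (by rw [sub_add_cancel, h])

lemma cycG_adj_iff {n : ℕ} [NeZero n] {i j : Fin n} :
    (cycG n).Adj i j ↔ i ≠ j ∧ (j = i + 1 ∨ i = j + 1) := by
  simp only [cycG, fromRel_adj, Fin.ext_iff, Fin.val_add, Fin.val_one', Nat.add_mod_mod]
  grind

lemma eq_add_one_or_eq_sub_one_of_cycG_adj {n : ℕ} [NeZero n] {i j : Fin n}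
    (h : (cycG n).Adj i j) : j = i + 1 ∨ j = i - 1 :=
  (cycG_adj_iff.mp h).2.imp id fun h => eq_sub_of_add_eq h.symm

lemma pathG_exists_adj {l : ℕ} {a b : Fin l} (hab : a ≠ b) : ∃ d, (pathG l).Adj a d := by
  have hab : a.val ≠ b.val := Fin.val_ne_of_ne hab
  by_cases h : a.val + 1 < l
  · exact ⟨⟨a.val + 1, h⟩, by simp [pathG, fromRel_adj, Fin.ext_iff]⟩
  · refine ⟨⟨a.val - 1, by omega⟩, ?_⟩
    simp only [pathG, fromRel_adj, ne_eq, Fin.ext_iff]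
    omega

lemma exists_adj_of_mem_range_pathG {V : Type*} {G : SimpleGraph V} {l : ℕ} (p : pathG l ↪g G)
    {u v : V} (hu : u ∈ Set.range p) (hv : v ∈ Set.range p) (huv : u ≠ v) :
    ∃ w ∈ Set.range p, G.Adj u w := by
  obtain ⟨a, rfl⟩ := hu
  obtain ⟨b, rfl⟩ := hv
  obtain ⟨d, had⟩ := pathG_exists_adj (ne_of_apply_ne p huv)
  exact ⟨p d, ⟨d, rfl⟩, p.map_adj_iff.mpr had⟩

lemma adj_pred_or_succ_of_adj_of_adj {V : Type*} {G : SimpleGraph V} {n : ℕ} [NeZero n]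
    (c : cycG n ↪g G) {l : ℕ} (p : pathG l ↪g G) {x : V}
    (hp : Set.range p = {y | y ∈ Set.range c ∧ G.Adj x y}) {i j : Fin n} (hji : j ≠ i)
    (hxi : G.Adj x (c i)) (hxj : G.Adj x (c j)) :
    G.Adj x (c (i - 1)) ∨ G.Adj x (c (i + 1)) := by
  obtain ⟨w, hw, hiw⟩ := exists_adj_of_mem_range_pathG p (hp ▸ ⟨⟨i, rfl⟩, hxi⟩)
    (hp ▸ ⟨⟨j, rfl⟩, hxj⟩) (c.injective.ne hji.symm)
  rw [hp] at hw
  obtain ⟨⟨k, rfl⟩, hxk⟩ := hw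
  rcases eq_add_one_or_eq_sub_one_of_cycG_adj (c.map_adj_iff.mp hiw) with rfl | rfl
  exacts [Or.inr hxk, Or.inl hxk]

lemma mem_Aset_union_Oset_union_Bset_of_adj {V : Type*} {G : SimpleGraph V} {n : ℕ} [NeZero n]
    (hn : 2 ≤ n) {c : Fin n → V} {i : Fin n} {o x : V} (ho : o ∈ Oset G c i)
    (hx : x ∉ Set.range c) (hox : G.Adj o x) (hxi : G.Adj x (c i))
    (hxc : ∀ j ≠ i, G.Adj x (c j) → G.Adj x (c (i - 1)) ∨ G.Adj x (c (i + 1))) :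
    x ∈ Aset G c i ∪ Oset G c i ∪ Bset G c i := by
  have hoi : G.Adj o (c i) := (ho.2 i).mpr rfl
  by_cases hpred : G.Adj x (c (i - 1))
  · exact .inl <| .inl ⟨hx, hpred, hxi, o, hox.symm, hoi,
      fun h => Fin.sub_one_ne_self hn i ((ho.2 _).mp h)⟩
  by_cases hsucc : G.Adj x (c (i + 1))
  · exact .inr ⟨hx, hxi, hsucc, o, hox.symm, hoi,
      fun h => Fin.add_one_ne_self hn i ((ho.2 _).mp h)⟩
  refine .inl <| .inr ⟨hx, fun j => ⟨fun hxj => ?_, fun h => h ▸ hxi⟩⟩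
  by_contra hji
  exact (hxc j hji hxj).elim hpred hsucc

theorem stmt19_general {V : Type*} (G : SimpleGraph V)
    (hpath : ∀ m : ℕ, 4 ≤ m → ∀ c' : cycG m ↪g G, ∀ u ∉ Set.range ⇑c',
      ∃ l, ∃ p : pathG l ↪g G,
        Set.range ⇑p = {x | x ∈ Set.range ⇑c' ∧ G.Adj u x})
    {n : ℕ} [NeZero n] (hn : 4 ≤ n) (c : cycG n ↪g G)
    (hcommon : ∀ u v, u ∉ Set.range ⇑c → v ∉ Set.range ⇑c → G.Adj u v →
      ∃ j, G.Adj u (c j) ∧ G.Adj v (c j))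
    (i : Fin n) (o : V) (ho : o ∈ Oset G ⇑c i) :
    G.neighborSet o =
      insert (c i) ((Aset G ⇑c i ∪ Oset G ⇑c i ∪ Bset G ⇑c i) ∩ G.neighborSet o) := by
  ext x
  simp only [mem_neighborSet, Set.mem_insert_iff, Set.mem_inter_iff]
  refine ⟨fun hox => ?_, ?_⟩
  · by_cases hx : x ∈ Set.range c
    · obtain ⟨j, rfl⟩ := hx
      exact .inl (congrArg c ((ho.2 j).mp hox))
    obtain ⟨j, hoj, hxj⟩ := hcommon o x ho.1 hx hox
    obtain rfl := (ho.2 j).mp hoj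
    obtain ⟨l, p, hp⟩ := hpath n hn c x hx
    exact .inr ⟨mem_Aset_union_Oset_union_Bset_of_adj (by omega) ho hx hox hxj
      fun k hk hxk => adj_pred_or_succ_of_adj_of_adj c p hp hk hxj hxk, hox⟩
  · rintro (rfl | ⟨-, hox⟩)
    exacts [(ho.2 i).mpr rfl, hox]

/-- Claim 13 of the paper: under the stated hypotheses, for every
`o ∈ O_i`, the neighborhood of `o` in `G` equals `{v_i}` together with the neighbors
of `o` inside `A_i ∪ O_i ∪ B_i`. -/
theorem stmt19 {V : Type*} [Finite V] (G : SimpleGraph V)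
    (hstar : ∀ k, 4 ≤ k → ¬ HasInduced (cycStar k) G)
    (hwheel : ∀ k, 4 ≤ k → ¬ HasInduced (wheelG k) G)
    (hpath : ∀ m : ℕ, 4 ≤ m → ∀ c' : cycG m ↪g G, ∀ u ∉ Set.range ⇑c',
      ∃ l, ∃ p : pathG l ↪g G,
        Set.range ⇑p = {x | x ∈ Set.range ⇑c' ∧ G.Adj u x})
    {n : ℕ} [NeZero n] (hn : 4 ≤ n) (c : cycG n ↪g G)
    (hcommon : ∀ u v, u ∉ Set.range ⇑c → v ∉ Set.range ⇑c → G.Adj u v →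
      ∃ j, G.Adj u (c j) ∧ G.Adj v (c j))
    (i : Fin n) (o : V) (ho : o ∈ Oset G ⇑c i) :
    G.neighborSet o =
      insert (c i) ((Aset G ⇑c i ∪ Oset G ⇑c i ∪ Bset G ⇑c i) ∩ G.neighborSet o) :=
  stmt19_general G hpath hn c hcommon i o ho
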